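/- arXiv:1804.09508 — 3 statements merged into one kernel-verified Lean document; each statement's English description precedes it below -/
import Mathlib

section
/- The Hamming weight of row i of the n-th Kronecker power of the kernel G = [[1,0],[1,1]] over GF(2) equals 2 raised to the number of ones in the binary representation of i. -/
open Matrix

/-- The polar kernel `G = [[1,0],[1,1]]` over `GF(2)`. -/
def G2 : Matrix (Fin 2) (Fin 2) (ZMod 2) := !![1, 0; 1, 1]

/-- Bit `k` of the natural number `i`, as an element of `Fin 2`. -/
def bitf (i k : ℕ) : Fin 2 := ⟨(Nat.testBit i k).toNat, Bool.toNat_lt _⟩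

/-- The `n`-fold Kronecker power of `G2`: with the standard Kronecker index
ordering, entry `(i, j)` is the product over the `n` bit positions of the
corresponding entries of `G2`. -/
def Gpow (n : ℕ) : Matrix (Fin (2 ^ n)) (Fin (2 ^ n)) (ZMod 2) :=
  fun i j => ∏ k ∈ Finset.range n, G2 (bitf (i : ℕ) k) (bitf (j : ℕ) k)


lemma G2_ne_zero_iff (a b : Fin 2) : G2 a b ≠ 0 ↔ b ≤ a := by
  fin_cases a <;> fin_cases b <;> simp [G2]

lemma bitf_val (j k : ℕ) : (bitf j k : ℕ) = j / 2 ^ k % 2 := by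
  rcases Nat.mod_two_eq_zero_or_one (j / 2 ^ k) with h | h <;>
    simp [bitf, Nat.testBit_eq_decide_div_mod_eq, h]

lemma symm_apply_eq_bitf {n : ℕ} (j : Fin (2 ^ n)) (k : Fin n) :
    (finFunctionFinEquiv (m := 2) (n := n)).symm j k = bitf (j : ℕ) (k : ℕ) := by
  apply Fin.ext
  rw [bitf_val]
  rfl

lemma card_le_filter (b : Fin 2) :
    (Finset.univ.filter fun a : Fin 2 => a ≤ b).card = (b : ℕ) + 1 := by
  fin_cases b <;> decide


/-- The Hamming weight of row `i` of `G^{⊗n}` equals `2` raised to the number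
of ones in the binary representation of `i`. -/
theorem gpow_row_weight (n : ℕ) (i : Fin (2 ^ n)) :
    ((Finset.univ.filter fun j : Fin (2 ^ n) => Gpow n i j ≠ 0).card)
      = 2 ^ (((Finset.range n).filter fun k => (i : ℕ).testBit k).card) := by
  classical
  have h1 : (Finset.univ.filter fun j : Fin (2 ^ n) => Gpow n i j ≠ 0)
      = Finset.univ.filter fun j : Fin (2 ^ n) =>
          ∀ k : Fin n, bitf (j : ℕ) (k : ℕ) ≤ bitf (i : ℕ) (k : ℕ) := by
    ext j
    simp only [Finset.mem_filter, Finset.mem_univ, true_and, Gpow,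
      Finset.prod_ne_zero_iff]
    constructor
    · intro h k
      exact (G2_ne_zero_iff _ _).1 (h k (Finset.mem_range.2 k.isLt))
    · intro h k hk
      exact (G2_ne_zero_iff _ _).2 (h ⟨k, Finset.mem_range.1 hk⟩)
  have h2 : (Finset.univ.filter fun j : Fin (2 ^ n) =>
        ∀ k : Fin n, bitf (j : ℕ) (k : ℕ) ≤ bitf (i : ℕ) (k : ℕ)).card
      = (Fintype.piFinset fun k : Fin n =>
          Finset.univ.filter fun a : Fin 2 => a ≤ bitf (i : ℕ) (k : ℕ)).card := by
    apply Finset.card_bij (fun j _ => (finFunctionFinEquiv (m := 2) (n := n)).symm j)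
    · intro j hj
      simp only [Finset.mem_filter, Finset.mem_univ, true_and] at hj
      simp only [Fintype.mem_piFinset, Finset.mem_filter, Finset.mem_univ, true_and]
      intro k
      rw [symm_apply_eq_bitf]; exact hj k
    · intro a _ b _ h
      exact (finFunctionFinEquiv (m := 2) (n := n)).symm.injective h
    · intro f hf
      refine ⟨finFunctionFinEquiv f, ?_, by simp⟩
      simp only [Fintype.mem_piFinset, Finset.mem_filter, Finset.mem_univ, true_and] at hf
      simp only [Finset.mem_filter, Finset.mem_univ, true_and]
      intro k
      have h := symm_apply_eq_bitf (n := n) (finFunctionFinEquiv f) k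
      rw [Equiv.symm_apply_apply] at h
      rw [← h]; exact hf k
  have h3 : (Fintype.piFinset fun k : Fin n =>
        Finset.univ.filter fun a : Fin 2 => a ≤ bitf (i : ℕ) (k : ℕ)).card
      = ∏ k : Fin n, ((bitf (i : ℕ) (k : ℕ) : ℕ) + 1) := by
    rw [Fintype.card_piFinset]
    exact Finset.prod_congr rfl fun k _ => card_le_filter _
  have h4 : ∀ k : ℕ, (bitf (i : ℕ) k : ℕ) + 1 = if (i : ℕ).testBit k then 2 else 1 := by
    intro k
    rcases hb : (i : ℕ).testBit k with _ | _ <;> simp [bitf, hb]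
  have h5 : (∏ k : Fin n, ((bitf (i : ℕ) (k : ℕ) : ℕ) + 1))
      = 2 ^ ((Finset.univ.filter fun k : Fin n => (i : ℕ).testBit (k : ℕ)).card) := by
    simp_rw [h4]
    rw [Finset.prod_ite, Finset.prod_const, Finset.prod_const, one_pow, mul_one]
  have h6 : (Finset.univ.filter fun k : Fin n => (i : ℕ).testBit (k : ℕ)).card
      = ((Finset.range n).filter fun k => (i : ℕ).testBit k).card := by
    rw [← Nat.Iio_eq_range, ← Fin.map_valEmbedding_univ, Finset.filter_map,
      Finset.card_map]
    rfl
  rw [h1, h2, h3, h5, h6]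
end

section
/- The code generated by M = (G^{⊗(t−p)})_0 ⊗ G^{⊗p} (G-PC node code) has dimension 2^t − 2^p, equivalently rate 1 − 2^{p−t}; consequently its dual code is exactly the span of the 2^p checks x ↦ ⊕_{i ≡ j (mod 2^p)} x_i, j = 0,…,2^p−1. -/
open Matrix

lemma idx_lt {t p : ℕ} (h : p ≤ t) (i : Fin (2 ^ (t - p))) (j : Fin (2 ^ p)) :
    (i : ℕ) * 2 ^ p + (j : ℕ) < 2 ^ t := by
  have hi := i.isLt
  have hj := j.isLt
  calc (i : ℕ) * 2 ^ p + (j : ℕ) < (i : ℕ) * 2 ^ p + 2 ^ p := by omega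
    _ = ((i : ℕ) + 1) * 2 ^ p := by ring
    _ ≤ 2 ^ (t - p) * 2 ^ p := Nat.mul_le_mul_right _ (by omega)
    _ = 2 ^ t := by rw [← pow_add, Nat.sub_add_cancel h]

/-- The generator matrix `M = (G^{⊗(t-p)})₀ ⊗ G^{⊗p}` of a G-PC node:
`(G^{⊗(t-p)})₀` is `G^{⊗(t-p)}` with its first row removed, and `⊗` is the
Kronecker product (columns indexed by `Fin (2^t)` via `c ↦ (c / 2^p, c % 2^p)`). -/
def Mgpc (t p : ℕ) (h : p ≤ t) :
    Matrix (Fin (2 ^ (t - p) - 1) × Fin (2 ^ p)) (Fin (2 ^ t)) (ZMod 2) :=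
  fun r c =>
    Gpow (t - p) ⟨(r.1 : ℕ) + 1, by have := r.1.isLt; omega⟩
        ⟨(c : ℕ) / 2 ^ p, by
          rw [Nat.div_lt_iff_lt_mul (by positivity), ← pow_add, Nat.sub_add_cancel h]
          exact c.isLt⟩ *
      Gpow p r.2 ⟨(c : ℕ) % 2 ^ p, Nat.mod_lt _ (by positivity)⟩

lemma bitf_eq_all {n : ℕ} (i j : Fin (2^n)) (hb : ∀ k : Fin n, bitf (i:ℕ) k = bitf (j:ℕ) k) : i = j := by
  have : (i:ℕ) = (j:ℕ) := by
    apply Nat.eq_of_testBit_eq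
    intro k
    by_cases hk : k < n
    · have := hb ⟨k, hk⟩
      simp only [bitf, Fin.ext_iff] at this
      cases h1 : (i:ℕ).testBit k <;> cases h2 : (j:ℕ).testBit k <;> simp_all
    · rw [Nat.testBit_lt_two_pow, Nat.testBit_lt_two_pow]
      · exact lt_of_lt_of_le j.isLt (Nat.pow_le_pow_right (by norm_num) (by omega))
      · exact lt_of_lt_of_le i.isLt (Nat.pow_le_pow_right (by norm_num) (by omega))
  exact Fin.ext this

noncomputable def bitsEquiv (n : ℕ) : Fin (2^n) ≃ (Fin n → Fin 2) :=
  Equiv.ofBijective (fun (i : Fin (2^n)) (k : Fin n) => bitf (i:ℕ) k)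
    ((Fintype.bijective_iff_injective_and_card _).mpr
      ⟨fun i j hij => bitf_eq_all i j (fun k => congrFun hij k), by simp⟩)

lemma bitsEquiv_symm_bit (n : ℕ) (g : Fin n → Fin 2) (k : Fin n) :
    bitf (((bitsEquiv n).symm g : Fin (2^n)) : ℕ) k = g k :=
  congrFun ((bitsEquiv n).apply_symm_apply g) k

/-- Key exchange: sum over indices of product over bits = product of sums. -/
lemma sum_prod_bits (n : ℕ) (F : Fin n → Fin 2 → ZMod 2) :
    ∑ i : Fin (2^n), ∏ k : Fin n, F k (bitf (i:ℕ) k) = ∏ k : Fin n, ∑ b : Fin 2, F k b := by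
  rw [← Equiv.sum_comp (bitsEquiv n).symm]
  simp only [bitsEquiv_symm_bit]
  rw [Finset.prod_univ_sum, Fintype.piFinset_univ]

lemma Gpow_eq_prod_fin (n : ℕ) (i j : Fin (2^n)) :
    Gpow n i j = ∏ k : Fin n, G2 (bitf (i:ℕ) k) (bitf (j:ℕ) k) := by
  exact (Fin.prod_univ_eq_prod_range (fun k => G2 (bitf (i:ℕ) k) (bitf (j:ℕ) k)) n).symm

lemma Gpow_mul_delta (n : ℕ) (i j : Fin (2^n)) :
    ∑ a : Fin (2^n), Gpow n i a * Gpow n a j = if i = j then 1 else 0 := by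
  have : ∀ a : Fin (2^n), Gpow n i a * Gpow n a j
      = ∏ k : Fin n, (G2 (bitf (i:ℕ) k) (bitf (a:ℕ) k) * G2 (bitf (a:ℕ) k) (bitf (j:ℕ) k)) := by
    intro a; rw [Gpow_eq_prod_fin, Gpow_eq_prod_fin, ← Finset.prod_mul_distrib]
  simp only [this]
  rw [sum_prod_bits n (fun k b => G2 (bitf (i:ℕ) k) b * G2 b (bitf (j:ℕ) k))]
  have h2 : ∀ x y : Fin 2, (∑ b : Fin 2, G2 x b * G2 b y) = if x = y then 1 else 0 := by decide
  simp only [h2]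
  rw [Finset.prod_boole]
  by_cases hij : i = j
  · simp [hij]
  · rw [if_neg hij, if_neg]
    intro hall
    exact hij (bitf_eq_all i j (fun k => hall k (Finset.mem_univ k)))

lemma Gpow_row_sum (n : ℕ) (i : Fin (2^n)) :
    ∑ j : Fin (2^n), Gpow n i j = if (i:ℕ) = 0 then 1 else 0 := by
  simp only [Gpow_eq_prod_fin]
  rw [sum_prod_bits n (fun k b => G2 (bitf (i:ℕ) k) b)]
  have h2 : ∀ x : Fin 2, (∑ b : Fin 2, G2 x b) = if x = 0 then 1 else 0 := by decide
  simp only [h2]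
  rw [Finset.prod_boole]
  have hzero : ∀ k : Fin n, bitf 0 (k:ℕ) = 0 := by intro k; simp [bitf]
  by_cases hi : (i:ℕ) = 0
  · rw [if_pos hi, if_pos]; intro k _; rw [hi]; exact hzero k
  · rw [if_neg hi, if_neg]
    intro hall
    have : i = ⟨0, by positivity⟩ := by
      apply bitf_eq_all
      intro k
      rw [hall k (Finset.mem_univ k)]
      exact (hzero k).symm
    exact hi (by simp [this])

lemma Gpow_col0 (n : ℕ) (i : Fin (2^n)) : Gpow n i ⟨0, by positivity⟩ = 1 := by
  rw [Gpow_eq_prod_fin]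
  apply Finset.prod_eq_one
  intro k _
  have h0 : bitf 0 (k:ℕ) = 0 := by simp [bitf]
  have hg : ∀ x : Fin 2, G2 x 0 = 1 := by decide
  show G2 (bitf (i:ℕ) k) (bitf 0 k) = 1
  rw [h0]; exact hg _

lemma Gpow_row0 (n : ℕ) (j : Fin (2^n)) :
    Gpow n ⟨0, by positivity⟩ j = if (j:ℕ) = 0 then 1 else 0 := by
  rw [Gpow_eq_prod_fin]
  have h0 : ∀ k : ℕ, bitf 0 k = 0 := by intro k; simp [bitf]
  have hg : ∀ b : Fin 2, G2 0 b = if b = 0 then 1 else 0 := by decide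
  simp only [h0, hg]
  rw [Finset.prod_boole]
  by_cases hj : (j:ℕ) = 0
  · rw [if_pos hj, if_pos]; intro k _; rw [show j = ⟨0, by positivity⟩ from Fin.ext hj]; exact h0 k
  · rw [if_neg hj, if_neg]
    intro hall
    have : j = ⟨0, by positivity⟩ := bitf_eq_all _ _ (fun k => by rw [hall k (Finset.mem_univ k), h0])
    exact hj (by simp [this])

lemma idx_lt' {t p : ℕ} (h : p ≤ t) (i : Fin (2 ^ (t - p))) (j : Fin (2 ^ p)) :
    (i : ℕ) * 2 ^ p + (j : ℕ) < 2 ^ t := by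
  have hi := i.isLt
  have hj := j.isLt
  calc (i : ℕ) * 2 ^ p + (j : ℕ) < (i : ℕ) * 2 ^ p + 2 ^ p := by omega
    _ = ((i : ℕ) + 1) * 2 ^ p := by ring
    _ ≤ 2 ^ (t - p) * 2 ^ p := Nat.mul_le_mul_right _ (by omega)
    _ = 2 ^ t := by rw [← pow_add, Nat.sub_add_cancel h]

lemma div_lt'' {t p : ℕ} (h : p ≤ t) (c : Fin (2^t)) : (c:ℕ) / 2^p < 2^(t-p) := by
  rw [Nat.div_lt_iff_lt_mul (by positivity), ← pow_add, Nat.sub_add_cancel h]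
  exact c.isLt

def splitEquiv (t p : ℕ) (h : p ≤ t) : Fin (2^(t-p)) × Fin (2^p) ≃ Fin (2^t) where
  toFun ab := ⟨(ab.1 : ℕ) * 2^p + (ab.2 : ℕ), idx_lt' h ab.1 ab.2⟩
  invFun c := (⟨(c:ℕ)/2^p, div_lt'' h c⟩, ⟨(c:ℕ)%2^p, Nat.mod_lt _ (by positivity)⟩)
  left_inv := by
    rintro ⟨a, b⟩
    have hb := b.isLt
    have hp : 0 < 2^p := by positivity
    have h1 : ((a:ℕ) * 2^p + (b:ℕ)) / 2^p = (a:ℕ) := by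
      rw [Nat.add_comm, Nat.mul_comm, Nat.add_mul_div_left _ _ hp, Nat.div_eq_of_lt hb, Nat.zero_add]
    have h2 : ((a:ℕ) * 2^p + (b:ℕ)) % 2^p = (b:ℕ) := by
      rw [Nat.add_comm, Nat.mul_comm, Nat.add_mul_mod_self_left, Nat.mod_eq_of_lt hb]
    ext
    · exact h1
    · exact h2
  right_inv := by
    intro c
    ext
    exact Nat.div_add_mod' _ _

lemma splitEquiv_div {t p : ℕ} (h : p ≤ t) (a : Fin (2^(t-p))) (b : Fin (2^p)) :
    ((splitEquiv t p h (a, b) : Fin (2^t)) : ℕ) / 2^p = (a:ℕ) := by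
  have := congrArg (fun x => ((x.1 : ℕ))) ((splitEquiv t p h).left_inv (a,b))
  simpa [splitEquiv] using this

lemma splitEquiv_mod {t p : ℕ} (h : p ≤ t) (a : Fin (2^(t-p))) (b : Fin (2^p)) :
    ((splitEquiv t p h (a, b) : Fin (2^t)) : ℕ) % 2^p = (b:ℕ) := by
  have := congrArg (fun x => ((x.2 : ℕ))) ((splitEquiv t p h).left_inv (a,b))
  simpa [splitEquiv] using this

lemma sum_split (t p : ℕ) (h : p ≤ t) (f : Fin (2^t) → ZMod 2) :
    ∑ c : Fin (2^t), f c
      = ∑ a : Fin (2^(t-p)), ∑ b : Fin (2^p), f (splitEquiv t p h (a, b)) := by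
  rw [← Equiv.sum_comp (splitEquiv t p h), Fintype.sum_prod_type]

/-- Gpow inversion of a summation. -/
lemma Gpow_inv_sum {m : ℕ} (f : Fin (2^m) → ZMod 2) (i : Fin (2^m)) :
    ∑ r : Fin (2^m), Gpow m i r * (∑ a : Fin (2^m), Gpow m r a * f a) = f i := by
  calc ∑ r : Fin (2^m), Gpow m i r * ∑ a : Fin (2^m), Gpow m r a * f a
      = ∑ r : Fin (2^m), ∑ a : Fin (2^m), (Gpow m i r * Gpow m r a) * f a := by
        simp [Finset.mul_sum, mul_assoc]
    _ = ∑ a : Fin (2^m), (∑ r : Fin (2^m), Gpow m i r * Gpow m r a) * f a := by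
        rw [Finset.sum_comm]; simp [Finset.sum_mul]
    _ = ∑ a : Fin (2^m), (if i = a then 1 else 0) * f a := by
        simp only [Gpow_mul_delta]
    _ = f i := by simp

lemma Gpow_col0' (n : ℕ) (i j : Fin (2^n)) (hj : (j:ℕ) = 0) : Gpow n i j = 1 := by
  rw [show j = ⟨0, by positivity⟩ from Fin.ext hj]; exact Gpow_col0 n i

lemma Gpow_row0' (n : ℕ) (i : Fin (2^n)) (hi : (i:ℕ) = 0) (j : Fin (2^n)) :
    Gpow n i j = if (j:ℕ) = 0 then 1 else 0 := by
  rw [show i = ⟨0, by positivity⟩ from Fin.ext hi]; exact Gpow_row0 n j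


lemma Mgpc_sum_mul (t p : ℕ) (h : p ≤ t) (r : Fin (2 ^ (t - p) - 1) × Fin (2 ^ p))
    (s : Fin (2 ^ (t - p))) (hs : (s : ℕ) = (r.1 : ℕ) + 1) (f : Fin (2 ^ t) → ZMod 2) :
    ∑ c : Fin (2 ^ t), Mgpc t p h r c * f c
      = ∑ a : Fin (2 ^ (t - p)), Gpow (t - p) s a *
          ∑ b : Fin (2 ^ p), Gpow p r.2 b * f (splitEquiv t p h (a, b)) := by
  rw [sum_split t p h]
  apply Finset.sum_congr rfl
  intro a _
  rw [Finset.mul_sum]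
  apply Finset.sum_congr rfl
  intro b _
  have key : Mgpc t p h r (splitEquiv t p h (a, b)) = Gpow (t - p) s a * Gpow p r.2 b := by
    rw [Mgpc]
    refine congrArg₂ (· * ·) (congrArg₂ (Gpow (t - p)) ?_ ?_) (congrArg₂ (Gpow p) rfl ?_) <;>
      apply Fin.ext
    · simp [hs]
    · exact splitEquiv_div h a b
    · exact splitEquiv_mod h a b
  rw [key, mul_assoc]

def Qfun (t p : ℕ) (h : p ≤ t) (y : Fin (2^t) → ZMod 2) (a : Fin (2^(t-p))) (r2 : Fin (2^p)) :
    ZMod 2 :=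
  ∑ b : Fin (2^p), Gpow p r2 b * y (splitEquiv t p h (a, b))

lemma y_const (t p : ℕ) (h : p ≤ t) (y : Fin (2^t) → ZMod 2)
    (hgen : ∀ r : Fin (2^(t-p)-1) × Fin (2^p), ∑ c : Fin (2^t), Mgpc t p h r c * y c = 0)
    (c : Fin (2^t)) :
    y c = y ⟨(c:ℕ) % 2^p,
      lt_of_lt_of_le (Nat.mod_lt _ (by positivity)) (Nat.pow_le_pow_right (by norm_num) h)⟩ := by
  set a0 : Fin (2^(t-p)) := ⟨(c:ℕ)/2^p, div_lt'' h c⟩ with ha0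
  set b0 : Fin (2^p) := ⟨(c:ℕ)%2^p, Nat.mod_lt _ (by positivity)⟩ with hb0
  set z : Fin (2^(t-p)) := ⟨0, by positivity⟩ with hz
  have hS : ∀ (r1 : Fin (2^(t-p))) (r2 : Fin (2^p)), (r1:ℕ) ≠ 0 →
      ∑ a : Fin (2^(t-p)), Gpow (t-p) r1 a * Qfun t p h y a r2 = 0 := by
    intro r1 r2 hne
    have hlt : (r1:ℕ) - 1 < 2^(t-p) - 1 := by have := r1.isLt; omega
    have hg := hgen (⟨(r1:ℕ)-1, hlt⟩, r2)
    rw [Mgpc_sum_mul t p h _ r1 (by simp; omega)] at hg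
    exact hg
  have hQ0 : ∀ r2 : Fin (2^p), Qfun t p h y a0 r2 = Qfun t p h y z r2 := by
    intro r2
    have h1 := Gpow_inv_sum (fun a => Qfun t p h y a r2) a0
    rw [← h1, Finset.sum_eq_single z]
    · rw [Gpow_col0' _ _ _ rfl, one_mul, Finset.sum_eq_single z]
      · rw [Gpow_row0' _ _ rfl, if_pos rfl, one_mul]
      · intro a _ haz
        rw [Gpow_row0' _ _ rfl, if_neg (fun hh => haz (Fin.ext (by simp [hz, hh]))), zero_mul]
      · intro habs; exact absurd (Finset.mem_univ z) habs
    · intro r1 _ hr1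
      rw [hS r1 r2 (fun hh => hr1 (Fin.ext (by simp [hz, hh]))), mul_zero]
    · intro habs; exact absurd (Finset.mem_univ z) habs
  have h2 := Gpow_inv_sum (fun b => y (splitEquiv t p h (a0, b))) b0
  have h3 := Gpow_inv_sum (fun b => y (splitEquiv t p h (z, b))) b0
  have hQa0 : ∀ r2 : Fin (2^p),
      (∑ b : Fin (2^p), Gpow p r2 b * y (splitEquiv t p h (a0, b))) = Qfun t p h y a0 r2 :=
    fun _ => rfl
  have hQz : ∀ r2 : Fin (2^p),
      (∑ b : Fin (2^p), Gpow p r2 b * y (splitEquiv t p h (z, b))) = Qfun t p h y z r2 :=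
    fun _ => rfl
  simp only [hQa0, hQ0] at h2
  simp only [hQz] at h3
  have hyy : y (splitEquiv t p h (a0, b0)) = y (splitEquiv t p h (z, b0)) := by
    rw [← h2, ← h3]
  have e1 : splitEquiv t p h (a0, b0) = c :=
    Fin.ext (Nat.div_add_mod' (c:ℕ) (2^p))
  have e2 : splitEquiv t p h (z, b0)
      = (⟨(c:ℕ) % 2^p,
          lt_of_lt_of_le (Nat.mod_lt _ (by positivity))
            (Nat.pow_le_pow_right (by norm_num) h)⟩ : Fin (2^t)) :=
    Fin.ext (by show (z:ℕ) * 2^p + (b0:ℕ) = (c:ℕ) % 2^p; simp [hz, hb0])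
  have hfin := hyy
  rw [e1, e2] at hfin
  exact hfin

def wvec (t p : ℕ) (h : p ≤ t) (r0 : Fin (2^(t-p)-1) × Fin (2^p)) : Fin (2^t) → ZMod 2 :=
  fun c => Gpow (t-p) ⟨(c:ℕ)/2^p, div_lt'' h c⟩ ⟨(r0.1:ℕ)+1, by have := r0.1.isLt; omega⟩ *
           Gpow p ⟨(c:ℕ)%2^p, Nat.mod_lt _ (by positivity)⟩ r0.2

lemma row_dot_w (t p : ℕ) (h : p ≤ t) (r r0 : Fin (2^(t-p)-1) × Fin (2^p)) :
    ∑ c : Fin (2^t), Mgpc t p h r c * wvec t p h r0 c = if r = r0 then 1 else 0 := by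
  set s : Fin (2^(t-p)) := ⟨(r.1:ℕ)+1, by have := r.1.isLt; omega⟩ with hsdef
  set s0 : Fin (2^(t-p)) := ⟨(r0.1:ℕ)+1, by have := r0.1.isLt; omega⟩ with hs0def
  rw [Mgpc_sum_mul t p h r s rfl]
  have hw : ∀ (a : Fin (2^(t-p))) (b : Fin (2^p)),
      wvec t p h r0 (splitEquiv t p h (a, b)) = Gpow (t-p) a s0 * Gpow p b r0.2 := by
    intro a b
    unfold wvec
    refine congrArg₂ (· * ·) (congrArg₂ (Gpow (t-p)) ?_ rfl) (congrArg₂ (Gpow p) ?_ rfl) <;>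
      apply Fin.ext
    · exact splitEquiv_div h a b
    · exact splitEquiv_mod h a b
  simp only [hw]
  have hinner : ∀ a : Fin (2^(t-p)),
      (∑ b : Fin (2^p), Gpow p r.2 b * (Gpow (t-p) a s0 * Gpow p b r0.2))
        = Gpow (t-p) a s0 * ∑ b : Fin (2^p), Gpow p r.2 b * Gpow p b r0.2 := by
    intro a
    rw [Finset.mul_sum]
    exact Finset.sum_congr rfl (fun b _ => by ring)
  simp only [hinner]
  have houter : ∀ a : Fin (2^(t-p)),
      Gpow (t-p) s a * (Gpow (t-p) a s0 * ∑ b : Fin (2^p), Gpow p r.2 b * Gpow p b r0.2)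
        = (Gpow (t-p) s a * Gpow (t-p) a s0) * ∑ b : Fin (2^p), Gpow p r.2 b * Gpow p b r0.2 :=
    fun a => by ring
  simp only [houter]
  rw [← Finset.sum_mul, Gpow_mul_delta, Gpow_mul_delta]
  have hss : (s = s0) ↔ r.1 = r0.1 := by
    rw [Fin.ext_iff, Fin.ext_iff, hsdef, hs0def]
    simp
  by_cases h1 : r.1 = r0.1 <;> by_cases h2 : r.2 = r0.2 <;>
    simp [Prod.ext_iff, h1, h2, hss.mpr, if_pos, if_neg, hss]

lemma row_dot_check (t p : ℕ) (h : p ≤ t) (r : Fin (2^(t-p)-1) × Fin (2^p)) (j : Fin (2^p)) :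
    ∑ c : Fin (2^t), Mgpc t p h r c *
      (if (c:ℕ) % 2^p = (j:ℕ) then (1 : ZMod 2) else 0) = 0 := by
  rw [Mgpc_sum_mul t p h r ⟨(r.1:ℕ)+1, by have := r.1.isLt; omega⟩ rfl]
  have hinner : ∀ a : Fin (2^(t-p)),
      (∑ b : Fin (2^p), Gpow p r.2 b *
        (if ((splitEquiv t p h (a, b) : Fin (2^t)) : ℕ) % 2^p = (j:ℕ) then (1 : ZMod 2) else 0))
        = Gpow p r.2 j := by
    intro a
    rw [Finset.sum_eq_single j]
    · rw [splitEquiv_mod h, if_pos rfl, mul_one]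
    · intro b _ hbj
      rw [splitEquiv_mod h, if_neg (fun hh => hbj (Fin.ext hh)), mul_zero]
    · intro habs; exact absurd (Finset.mem_univ j) habs
  simp only [hinner]
  rw [← Finset.sum_mul, Gpow_row_sum, if_neg (by simp), zero_mul]

/-- The G-PC code (row space of `M = (G^{⊗(t-p)})₀ ⊗ G^{⊗p}`) has dimension
`2^t - 2^p`, and its dual code is exactly the span of the `2^p` parity checks
`x ↦ ⊕_{i ≡ j (mod 2^p)} x_i`. -/
theorem gpc_dimension_and_dual (t p : ℕ) (h : p ≤ t) :
    Module.finrank (ZMod 2)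
        ↥(Submodule.span (ZMod 2)
          (Set.range fun r : Fin (2 ^ (t - p) - 1) × Fin (2 ^ p) =>
            (Mgpc t p h r : Fin (2 ^ t) → ZMod 2))) = 2 ^ t - 2 ^ p ∧
    {y : Fin (2 ^ t) → ZMod 2 |
        ∀ x ∈ Submodule.span (ZMod 2)
          (Set.range fun r : Fin (2 ^ (t - p) - 1) × Fin (2 ^ p) =>
            (Mgpc t p h r : Fin (2 ^ t) → ZMod 2)),
          ∑ c : Fin (2 ^ t), x c * y c = 0} =
      ↑(Submodule.span (ZMod 2)
        (Set.range fun j : Fin (2 ^ p) =>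
          (fun c : Fin (2 ^ t) => if (c : ℕ) % 2 ^ p = (j : ℕ) then (1 : ZMod 2) else 0))) := by
  constructor
  · -- dimension
    have hLI : LinearIndependent (ZMod 2)
        (fun r : Fin (2 ^ (t - p) - 1) × Fin (2 ^ p) =>
          (Mgpc t p h r : Fin (2 ^ t) → ZMod 2)) := by
      rw [Fintype.linearIndependent_iff]
      intro g hg r0
      have h0 : ∑ c : Fin (2 ^ t),
          (∑ r : Fin (2 ^ (t - p) - 1) × Fin (2 ^ p), g r • Mgpc t p h r) c
            * wvec t p h r0 c = 0 := by
        rw [hg]; simp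
      calc g r0 = ∑ r : Fin (2 ^ (t - p) - 1) × Fin (2 ^ p),
            g r * (if r = r0 then 1 else 0) := by simp
        _ = ∑ r : Fin (2 ^ (t - p) - 1) × Fin (2 ^ p),
            g r * ∑ c : Fin (2 ^ t), Mgpc t p h r c * wvec t p h r0 c := by
            simp only [row_dot_w]
        _ = ∑ r : Fin (2 ^ (t - p) - 1) × Fin (2 ^ p), ∑ c : Fin (2 ^ t),
            g r * (Mgpc t p h r c * wvec t p h r0 c) := by
            simp [Finset.mul_sum]
        _ = ∑ c : Fin (2 ^ t), ∑ r : Fin (2 ^ (t - p) - 1) × Fin (2 ^ p),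
            g r * (Mgpc t p h r c * wvec t p h r0 c) := Finset.sum_comm
        _ = ∑ c : Fin (2 ^ t),
            (∑ r : Fin (2 ^ (t - p) - 1) × Fin (2 ^ p), g r • Mgpc t p h r) c
              * wvec t p h r0 c := by
            apply Finset.sum_congr rfl
            intro c _
            rw [Finset.sum_apply, Finset.sum_mul]
            exact Finset.sum_congr rfl (fun r _ => by simp [mul_assoc])
        _ = 0 := h0
    rw [finrank_span_eq_card hLI, Fintype.card_prod, Fintype.card_fin, Fintype.card_fin]
    have h2 : 2 ^ (t - p) * 2 ^ p = 2 ^ t := by rw [← pow_add, Nat.sub_add_cancel h]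
    rw [Nat.sub_mul, one_mul, h2]
  · -- dual
    ext y
    simp only [Set.mem_setOf_eq, SetLike.mem_coe]
    constructor
    · intro hy
      have hgen : ∀ r : Fin (2 ^ (t - p) - 1) × Fin (2 ^ p),
          ∑ c : Fin (2 ^ t), Mgpc t p h r c * y c = 0 :=
        fun r => hy _ (Submodule.subset_span ⟨r, rfl⟩)
      have hconst := y_const t p h y hgen
      have hjlt : ∀ j : Fin (2 ^ p), (j : ℕ) < 2 ^ t :=
        fun j => lt_of_lt_of_le j.isLt (Nat.pow_le_pow_right (by norm_num) h)
      have hrep : y = ∑ j : Fin (2 ^ p), y ⟨(j : ℕ), hjlt j⟩ •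
          (fun c : Fin (2 ^ t) => if (c : ℕ) % 2 ^ p = (j : ℕ) then (1 : ZMod 2) else 0) := by
        funext c
        rw [Finset.sum_apply,
          Finset.sum_eq_single (⟨(c : ℕ) % 2 ^ p, Nat.mod_lt _ (by positivity)⟩ : Fin (2 ^ p))]
        · simp only [Pi.smul_apply, smul_eq_mul]
          simp only [if_pos rfl, if_true, mul_one]
          exact hconst c
        · intro j _ hj
          simp only [Pi.smul_apply, smul_eq_mul]
          rw [if_neg (fun hh => hj (Fin.ext hh.symm)), mul_zero]
        · intro habs; exact absurd (Finset.mem_univ _) habs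
      rw [hrep]
      exact Submodule.sum_mem _
        (fun j _ => Submodule.smul_mem _ _ (Submodule.subset_span ⟨j, rfl⟩))
    · intro hy x hx
      have hrows : ∀ r : Fin (2 ^ (t - p) - 1) × Fin (2 ^ p),
          ∑ c : Fin (2 ^ t), Mgpc t p h r c * y c = 0 := by
        clear hx
        induction hy using Submodule.span_induction with
        | mem v hv =>
          obtain ⟨j, rfl⟩ := hv
          intro r
          exact row_dot_check t p h r j
        | zero => intro r; simp
        | add v w _ _ hv hw =>
          intro r
          simp only [Pi.add_apply, mul_add, Finset.sum_add_distrib, hv r, hw r, add_zero]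
        | smul a v _ hv =>
          intro r
          simp only [Pi.smul_apply, smul_eq_mul, mul_left_comm, ← Finset.mul_sum, hv r, mul_zero]
      clear hy
      induction hx using Submodule.span_induction with
      | mem v hv =>
        obtain ⟨r, rfl⟩ := hv
        exact hrows r
      | zero => simp
      | add v w _ _ hv hw =>
        simp only [Pi.add_apply, add_mul, Finset.sum_add_distrib, hv, hw, add_zero]
      | smul a v _ hv =>
        simp only [Pi.smul_apply, smul_eq_mul, mul_assoc, ← Finset.mul_sum, hv, mul_zero]
end

section
/- Wagner decoding is maximum-likelihood for the single parity-check code: given real LLRs α_0,…,α_{n−1}, let y_i = HD(α_i) (hard decision: 0 if α_i ≥ 0, else 1), and if ⊕ y_i = 1 flip y at an index minimizing |α_i|. The resulting word maximizes Σ_i (1−2x_i)α_i over all x in the SPC code {x : ⊕ x_i = 0}. -/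
/-- Hard decision on an LLR: `0` if `α ≥ 0`, else `1`. -/
noncomputable def HD (a : ℝ) : ZMod 2 := if 0 ≤ a then 0 else 1

/-- Correlation metric of a candidate codeword `x` with the LLR vector `α`:
`Σ_i (1 - 2 x_i) α_i`. -/
def corr {n : ℕ} (α : Fin n → ℝ) (x : Fin n → ZMod 2) : ℝ :=
  ∑ i, (1 - 2 * ((x i).val : ℝ)) * α i

lemma term_eq (a : ℝ) (x : ZMod 2) :
    (1 - 2 * (x.val : ℝ)) * a = |a| - 2 * (if x ≠ HD a then |a| else 0) := by
  unfold HD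
  rcases (by decide : ∀ z : ZMod 2, z = 0 ∨ z = 1) x with rfl | rfl <;>
    rcases le_or_gt 0 a with h | h
  · simp [h, abs_of_nonneg h]
  · simp [not_le.mpr h, abs_of_neg h]; ring
  · simp [h, abs_of_nonneg h, ZMod.val_one]; ring
  · simp [not_le.mpr h, abs_of_neg h, ZMod.val_one]; ring

lemma corr_eq {n : ℕ} (α : Fin n → ℝ) (x : Fin n → ZMod 2) :
    corr α x = (∑ i, |α i|)
      - 2 * ∑ i ∈ Finset.univ.filter (fun i => x i ≠ HD (α i)), |α i| := by
  unfold corr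
  rw [Finset.sum_filter, Finset.mul_sum, ← Finset.sum_sub_distrib]
  exact Finset.sum_congr rfl fun i _ => term_eq (α i) (x i)

lemma card_filter_parity {n : ℕ} (x y : Fin n → ZMod 2) :
    ((Finset.univ.filter (fun i => x i ≠ y i)).card : ZMod 2)
      = (∑ i, x i) + ∑ i, y i := by
  have h : ∀ a b : ZMod 2, (if a ≠ b then (1 : ZMod 2) else 0) = a + b := by decide
  rw [← Finset.sum_add_distrib, ← Finset.sum_boole]
  exact Finset.sum_congr rfl fun i _ => h _ _

/-- Wagner decoding is maximum-likelihood for the single parity-check code: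
take hard decisions `y_i = HD(α_i)`; if their parity is odd, flip the position
`i0` minimizing `|α_i|`. The result is an SPC codeword maximizing the
correlation metric over the SPC code `{x : ⊕ x_i = 0}`. -/
theorem wagner_ml_spc (n : ℕ) (α : Fin n → ℝ) (i0 : Fin n)
    (hmin : ∀ i, |α i0| ≤ |α i|) :
    let y : Fin n → ZMod 2 := fun i => HD (α i)
    let w : Fin n → ZMod 2 := fun i => if (∑ k, y k) = 1 ∧ i = i0 then y i + 1 else y i
    (∑ i, w i) = 0 ∧ ∀ x : Fin n → ZMod 2, (∑ i, x i) = 0 → corr α x ≤ corr α w := by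
  intro y w
  have hy : ∀ i, y i = HD (α i) := fun i => rfl
  by_cases hs : (∑ k, y k) = 1
  · -- odd parity case : flip at i0
    have hw : ∀ i, w i = if i = i0 then y i + 1 else y i := by
      intro i; simp only [w, hs, true_and]
    have hwy : Finset.univ.filter (fun i => w i ≠ HD (α i)) = {i0} := by
      ext i
      simp only [Finset.mem_filter, Finset.mem_univ, true_and, Finset.mem_singleton, hw i,
        ← hy i]
      rcases eq_or_ne i i0 with h | h
      · simp [h]
      · simp [h]
    have hsumw : (∑ i, w i) = 0 := by
      have : (∑ i, w i) = (∑ i, y i) + ∑ i, (if i = i0 then (1 : ZMod 2) else 0) := by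
        rw [← Finset.sum_add_distrib]
        refine Finset.sum_congr rfl fun i _ => ?_
        rw [hw i]; rcases eq_or_ne i i0 with h | h <;> simp [h]
      rw [this, hs, Finset.sum_ite_eq' Finset.univ i0 (fun _ => (1 : ZMod 2))]
      simp only [Finset.mem_univ, if_true]
      decide
    refine ⟨hsumw, fun x hx => ?_⟩
    rw [corr_eq, corr_eq, hwy, Finset.sum_singleton]
    have hcard := card_filter_parity x (fun i => HD (α i))
    have hcard1 : ((Finset.univ.filter (fun i => x i ≠ HD (α i))).card : ZMod 2) = 1 := by
      rw [hcard, hx]; simpa using hs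
    have hne : (Finset.univ.filter (fun i => x i ≠ HD (α i))).Nonempty := by
      rw [← Finset.card_pos]
      rcases Nat.eq_zero_or_pos (Finset.univ.filter (fun i => x i ≠ HD (α i))).card with h | h
      · rw [h] at hcard1; simp at hcard1
      · exact h
    obtain ⟨j, hj⟩ := hne
    have h1 : |α i0| ≤ ∑ i ∈ Finset.univ.filter (fun i => x i ≠ HD (α i)), |α i| :=
      le_trans (hmin j) (Finset.single_le_sum (f := fun i => |α i|)
        (fun i _ => abs_nonneg _) hj)
    linarith
  · -- even parity case : w = y
    have hw : ∀ i, w i = y i := by intro i; simp only [w, hs, false_and, if_false]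
    have hs0 : (∑ i, y i) = 0 := by
      rcases (by decide : ∀ z : ZMod 2, z = 0 ∨ z = 1) (∑ k, y k) with h | h
      · exact h
      · exact absurd h hs
    constructor
    · rw [Finset.sum_congr rfl fun i _ => hw i]; exact hs0
    · intro x hx
      rw [corr_eq, corr_eq]
      have hwy : Finset.univ.filter (fun i => w i ≠ HD (α i)) = ∅ := by
        ext i; simp [hw i, hy i]
      rw [hwy]
      have : (0:ℝ) ≤ ∑ i ∈ Finset.univ.filter (fun i => x i ≠ HD (α i)), |α i| :=
        Finset.sum_nonneg fun i _ => abs_nonneg _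
      simp only [Finset.sum_empty]
      linarith
end
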